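/- arXiv:1003.1332 — 8 statements merged into one kernel-verified Lean document; each statement's English description precedes it below -/
import Mathlib

section
/- For the set S = {1/n! : n ∈ ℕ, n ≥ 1} ⊆ ℝ, the lower tangent cone of S at 0 equals {0}. -/
/-!
Every `1 / n!` is positive, so a negative direction leaves the set at linear speed, while
`1 / n! → 0` makes `0` a tangent direction. A positive direction fails because the gaps are
large: since `(n + 1)! ≥ 2 n!`, the midpoint `m` of the gap between `1 / (n + 1)!` and `1 / n!`
is at distance at least `m / 3` from the set, and these midpoints tend to `0`.
-/

open Filter Metric Topology

/-- Lower tangent cone (Peano): `v ∈ Tan⁻(S,x)` iff `lim_{t→0⁺} (1/t) d(x+tv,S) = 0`. -/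
def lowerTangentCone (S : Set ℝ) (x : ℝ) : Set ℝ :=
  {v : ℝ | Filter.Tendsto (fun t : ℝ => t⁻¹ * Metric.infDist (x + t * v) S) (𝓝[>] (0:ℝ)) (𝓝 0)}

open Set
open scoped Nat

theorem zero_mem_lowerTangentCone {S : Set ℝ} {x : ℝ} (hx : x ∈ closure S) :
    0 ∈ lowerTangentCone S x := by
  simp [lowerTangentCone, infDist_zero_of_mem_closure hx]

theorem nonneg_of_mem_lowerTangentCone_of_subset_Ici {S : Set ℝ} {x v : ℝ} (hne : S.Nonempty)
    (hS : S ⊆ Ici x) (hv : v ∈ lowerTangentCone S x) : 0 ≤ v := by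
  by_contra! hneg
  have hbound : ∀ᶠ t in 𝓝[>] (0 : ℝ), -v ≤ t⁻¹ * infDist (x + t * v) S := by
    filter_upwards [self_mem_nhdsWithin] with t (ht : 0 < t)
    rw [le_inv_mul_iff₀ ht, le_infDist hne]
    intro y hy
    have : x ≤ y := hS hy
    rw [Real.dist_eq, abs_of_neg (by nlinarith)]
    linarith
  linarith [ge_of_tendsto hv hbound]

theorem nonpos_of_mem_lowerTangentCone_of_gaps {S : Set ℝ} {x v c : ℝ} {u : ℕ → ℝ} (hc : 0 < c)
    (hu : Tendsto u atTop (𝓝[>] x)) (hgap : ∀ᶠ k in atTop, c * (u k - x) ≤ infDist (u k) S)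
    (hv : v ∈ lowerTangentCone S x) : v ≤ 0 := by
  by_contra! hpos
  obtain ⟨hu_lim, hu_gt⟩ := tendsto_nhdsWithin_iff.1 hu
  set t : ℕ → ℝ := fun k => (u k - x) / v
  have ht : Tendsto t atTop (𝓝[>] 0) := by
    refine tendsto_nhdsWithin_iff.2 ⟨?_, ?_⟩
    · simpa using (hu_lim.sub_const x).div_const v
    · filter_upwards [hu_gt] with k (hk : x < u k)
      exact div_pos (sub_pos.2 hk) hpos
  have hbound : ∀ᶠ k in atTop, c * v ≤ (t k)⁻¹ * infDist (x + t k * v) S := by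
    filter_upwards [hgap, hu_gt] with k hk (hxk : x < u k)
    have hd : 0 < u k - x := sub_pos.2 hxk
    have : x + t k * v = u k := by simp only [t]; field_simp; ring
    rw [this, inv_div, div_mul_eq_mul_div, le_div_iff₀ hd]
    nlinarith
  linarith [ge_of_tendsto (hv.comp ht) hbound, mul_pos hc hpos]

theorem le_infDist_midpoint_of_disjoint_Ioo {S : Set ℝ} {a b : ℝ} (hne : S.Nonempty)
    (h : Disjoint S (Ioo a b)) : (b - a) / 2 ≤ infDist ((a + b) / 2) S := by
  rw [le_infDist hne]
  intro y hy
  rw [dist_comm, ← not_lt, ← mem_ball, ← Real.Ioo_eq_ball]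
  exact h.notMem_of_mem_left hy

def invFactorials : Set ℝ := {x : ℝ | ∃ n : ℕ, 1 ≤ n ∧ x = 1 / (n ! : ℝ)}

theorem invFactorials_nonempty : invFactorials.Nonempty := ⟨1, 1, le_rfl, by norm_num⟩

theorem invFactorials_subset_Ici : invFactorials ⊆ Ici (0 : ℝ) := by
  rintro _ ⟨n, -, rfl⟩
  exact mem_Ici.2 (by positivity)

theorem inv_factorial_mem_invFactorials (n : ℕ) : ((n + 1)! : ℝ)⁻¹ ∈ invFactorials :=
  ⟨n + 1, le_add_self, one_div _ |>.symm⟩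

theorem tendsto_inv_factorial : Tendsto (fun n : ℕ => (n ! : ℝ)⁻¹) atTop (𝓝 0) := by
  simpa using FloorSemiring.tendsto_pow_div_factorial_atTop (1 : ℝ)

theorem zero_mem_closure_invFactorials : (0 : ℝ) ∈ closure invFactorials :=
  mem_closure_of_tendsto (tendsto_inv_factorial.comp (tendsto_add_atTop_nat 1))
    (Eventually.of_forall inv_factorial_mem_invFactorials)

theorem inv_factorial_antitone : Antitone fun n : ℕ => (n ! : ℝ)⁻¹ := fun _ _ h =>
  inv_anti₀ (by positivity) (by exact_mod_cast Nat.factorial_le h)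

theorem disjoint_invFactorials_Ioo (k : ℕ) :
    Disjoint invFactorials (Ioo ((k + 1)! : ℝ)⁻¹ (k ! : ℝ)⁻¹) := by
  rw [disjoint_left]
  rintro _ ⟨n, -, rfl⟩ ⟨hlo, hhi⟩
  rw [one_div] at hlo hhi
  rcases le_or_gt n k with hn | hn
  · exact (inv_factorial_antitone hn).not_gt hhi
  · exact (inv_factorial_antitone hn).not_gt hlo

theorem inv_factorial_succ_le_half (n : ℕ) :
    ((n + 2)! : ℝ)⁻¹ ≤ ((n + 1)! : ℝ)⁻¹ / 2 := by
  rw [Nat.factorial_succ (n + 1), Nat.cast_mul, mul_inv, div_eq_inv_mul]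
  gcongr
  push_cast
  linarith [(n.cast_nonneg : (0 : ℝ) ≤ n)]

noncomputable def gapMidpoint (n : ℕ) : ℝ := (((n + 2)! : ℝ)⁻¹ + ((n + 1)! : ℝ)⁻¹) / 2

theorem tendsto_gapMidpoint : Tendsto gapMidpoint atTop (𝓝[>] 0) := by
  refine tendsto_nhdsWithin_iff.2 ⟨?_, Eventually.of_forall fun n => by
    simp only [gapMidpoint, mem_Ioi]; positivity⟩
  have h := fun k => tendsto_inv_factorial.comp (tendsto_add_atTop_nat k)
  unfold gapMidpoint
  simpa using ((h 2).add (h 1)).div_const 2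

theorem gapMidpoint_div_three_le_infDist (n : ℕ) :
    gapMidpoint n / 3 ≤ infDist (gapMidpoint n) invFactorials := by
  refine le_trans ?_ (le_infDist_midpoint_of_disjoint_Ioo invFactorials_nonempty
    (disjoint_invFactorials_Ioo (n + 1)))
  rw [gapMidpoint]
  linarith [inv_factorial_succ_le_half n]

theorem lowerTangentCone_factorial_set :
    lowerTangentCone {x : ℝ | ∃ n : ℕ, 1 ≤ n ∧ x = 1 / (Nat.factorial n : ℝ)} 0
      = ({0} : Set ℝ) := by
  show lowerTangentCone invFactorials 0 = {0}
  ext v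
  refine ⟨fun hv => le_antisymm ?_ ?_, ?_⟩
  · refine nonpos_of_mem_lowerTangentCone_of_gaps (c := 1 / 3) (by norm_num) tendsto_gapMidpoint
      (Eventually.of_forall fun n => ?_) hv
    linarith [gapMidpoint_div_three_le_infDist n]
  · exact nonneg_of_mem_lowerTangentCone_of_subset_Ici invFactorials_nonempty
      invFactorials_subset_Ici hv
  · rintro rfl
    exact zero_mem_lowerTangentCone zero_mem_closure_invFactorials
end

section
/- (Cassina's theorem) There exists a nonzero vector in the upper tangent cone of A at x (equivalently, a tangent half-line of A at x) if and only if x is an accumulation point of A. -/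
open Filter Metric Topology

/-- Upper tangent cone (sequential description). -/
def upperTangentCone {n : ℕ} (A : Set (EuclideanSpace ℝ (Fin n)))
    (x : EuclideanSpace ℝ (Fin n)) : Set (EuclideanSpace ℝ (Fin n)) :=
  {v | ∃ (lam : ℕ → ℝ) (u : ℕ → EuclideanSpace ℝ (Fin n)),
      (∀ k, 0 < lam k) ∧ Filter.Tendsto lam Filter.atTop (𝓝 0) ∧
      (∀ k, u k ∈ A) ∧ Filter.Tendsto u Filter.atTop (𝓝 x) ∧
      Filter.Tendsto (fun k => (lam k)⁻¹ • (u k - x)) Filter.atTop (𝓝 v)}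

/-- Cassina's theorem: there is a nonzero tangent vector (a tangent half-line) of `A`
at `x` iff `x` is an accumulation point of `A`. -/
theorem exists_nonzero_tangent_iff_accPt {n : ℕ}
    (A : Set (EuclideanSpace ℝ (Fin n))) (x : EuclideanSpace ℝ (Fin n)) :
    (∃ v ∈ upperTangentCone A x, v ≠ 0) ↔ AccPt x (Filter.principal A) := by
  constructor
  · rintro ⟨v, ⟨lam, u, hpos, hlam, huA, hux, hconv⟩, hv⟩
    rw [accPt_iff_nhds]
    intro U hU
    have h1 : ∀ᶠ k in atTop, u k ∈ U := hux.eventually_mem hU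
    have h2 : ∀ᶠ k in atTop, (lam k)⁻¹ • (u k - x) ≠ 0 := by
      have : {w : EuclideanSpace ℝ (Fin n) | w ≠ 0} ∈ 𝓝 v :=
        IsOpen.mem_nhds isOpen_compl_singleton hv
      exact hconv.eventually this
    obtain ⟨k, hkU, hk0⟩ := (h1.and h2).exists
    refine ⟨u k, ⟨hkU, huA k⟩, ?_⟩
    intro h
    apply hk0
    rw [h, sub_self, smul_zero]
  · intro hacc
    rw [accPt_iff_nhds] at hacc
    have hy : ∀ k : ℕ, ∃ y, y ∈ ball x (1 / (k + 1)) ∩ A ∧ y ≠ x := by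
      intro k
      exact hacc _ (ball_mem_nhds x (by positivity))
    choose y hy hyx using hy
    set lam : ℕ → ℝ := fun k => ‖y k - x‖ with hlamdef
    have hpos : ∀ k, 0 < lam k := by
      intro k
      simp only [hlamdef, norm_pos_iff]
      exact sub_ne_zero.mpr (hyx k)
    have hlt : ∀ k, lam k < 1 / (k + 1) := by
      intro k
      have := (hy k).1
      rw [mem_ball, dist_eq_norm] at this
      exact this
    have hlam0 : Tendsto lam atTop (𝓝 0) := by
      apply squeeze_zero (fun k => (hpos k).le) (fun k => (hlt k).le)
      exact tendsto_one_div_add_atTop_nhds_zero_nat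
    have hdist : ∀ k, dist (y k) x ≤ 1 / (k + 1) := by
      intro k
      rw [dist_eq_norm]
      exact (hlt k).le
    have hyx2 : Tendsto y atTop (𝓝 x) := by
      rw [tendsto_iff_dist_tendsto_zero]
      exact squeeze_zero (fun k => dist_nonneg) hdist
        tendsto_one_div_add_atTop_nhds_zero_nat
    set w : ℕ → EuclideanSpace ℝ (Fin n) := fun k => (lam k)⁻¹ • (y k - x) with hwdef
    have hw : ∀ k, w k ∈ sphere (0 : EuclideanSpace ℝ (Fin n)) 1 := by
      intro k
      rw [mem_sphere_zero_iff_norm, hwdef]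
      simp only [norm_smul, norm_inv, Real.norm_eq_abs, abs_of_pos (hpos k)]
      exact inv_mul_cancel₀ (hpos k).ne'
    obtain ⟨v, hvs, φ, hφ, hwv⟩ :=
      (isCompact_sphere (0 : EuclideanSpace ℝ (Fin n)) 1).tendsto_subseq hw
    refine ⟨v, ⟨lam ∘ φ, y ∘ φ, fun k => hpos (φ k),
      hlam0.comp hφ.tendsto_atTop, fun k => (hy (φ k)).2,
      hyx2.comp hφ.tendsto_atTop, hwv⟩, ?_⟩
    intro h
    rw [h, mem_sphere_zero_iff_norm, norm_zero] at hvs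
    exact one_ne_zero hvs.symm
end

section
/- The set of gradients Df(x), as f ranges over all functions ℝⁿ → ℝ differentiable at x with max over A attained at x, equals the normal cone Nor(A,x) = {w : ⟨w, v⟩ ≤ 0 for all v ∈ Tan⁺(A,x)}. -/
/-!
A gradient `w = Df(x)` at a maximum of `f` over `A` pairs nonpositively with every tangent
direction: this is Fermat's rule along the sequences defining `Tan⁺(A,x)`. Conversely, if
`w ∈ Nor(A,x)`, compactness of the unit sphere shows `⟪w, y - x⟫ ≤ ε ‖y - x‖` for `y ∈ A`
near `x`; hence the radial modulus `g(r) = sup {⟪w, y - x⟫⁺ : y ∈ A, ‖y - x‖ ≤ r}` is `o(r)`,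
and `f(y) = ⟪w, y⟫ - g(‖y - x‖)` has gradient `w` at `x` and is maximized over `A` at `x`.
-/

open Filter Metric Topology RealInnerProductSpace

def normalCone {n : ℕ} (A : Set (EuclideanSpace ℝ (Fin n)))
    (x : EuclideanSpace ℝ (Fin n)) : Set (EuclideanSpace ℝ (Fin n)) :=
  {w | ∀ v ∈ upperTangentCone A x, ⟪w, v⟫ ≤ 0}

section RadialSup

variable {E : Type*} [SeminormedAddCommGroup E]
  {φ : E → ℝ} {s : Set E} {x y : E} {r a : ℝ}

/-- Over an empty set this is `sSup ∅ = 0` in `ℝ`, which agrees with taking positive parts,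
so no nonemptiness hypothesis is ever needed. -/
noncomputable def radialSup (φ : E → ℝ) (s : Set E) (x : E) (r : ℝ) : ℝ :=
  sSup ((fun y => max (φ y) 0) '' (s ∩ closedBall x r))

lemma radialSup_nonneg : 0 ≤ radialSup φ s x r :=
  Real.sSup_nonneg <| by rintro _ ⟨y, -, rfl⟩; exact le_max_right _ _

lemma radialSup_le (h : ∀ y ∈ s, ‖y - x‖ ≤ r → φ y ≤ a) (ha : 0 ≤ a) :
    radialSup φ s x r ≤ a :=
  Real.sSup_le (by
    rintro _ ⟨y, ⟨hy, hyr⟩, rfl⟩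
    exact max_le (h y hy (mem_closedBall_iff_norm.1 hyr)) ha) ha

lemma le_radialSup {C : ℝ} (hC : ∀ z, φ z ≤ C * ‖z - x‖) (hy : y ∈ s) :
    φ y ≤ radialSup φ s x ‖y - x‖ := by
  have hbdd : BddAbove ((fun z => max (φ z) 0) '' (s ∩ closedBall x ‖y - x‖)) := by
    refine ⟨|C| * ‖y - x‖, ?_⟩
    rintro _ ⟨z, ⟨-, hz⟩, rfl⟩
    rw [mem_closedBall_iff_norm] at hz
    refine max_le ((hC z).trans ?_) (by positivity)
    calc C * ‖z - x‖ ≤ |C| * ‖z - x‖ := by gcongr; exact le_abs_self C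
      _ ≤ |C| * ‖y - x‖ := by gcongr
  exact (le_max_left _ _).trans
    (le_csSup hbdd ⟨y, ⟨hy, mem_closedBall_iff_norm.2 le_rfl⟩, rfl⟩)

end RadialSup

section Construction

variable {E : Type*} [NormedAddCommGroup E] [NormedSpace ℝ E] {s : Set E} {x : E}

theorem exists_hasFDerivAt_isMaxOn (ℓ : E →L[ℝ] ℝ)
    (hℓ : ∀ ε > 0, ∀ᶠ y in 𝓝[s] x, ℓ (y - x) ≤ ε * ‖y - x‖) :
    ∃ f : E → ℝ, HasFDerivAt f ℓ x ∧ IsMaxOn f s x := by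
  set g : E → ℝ := fun y => radialSup (fun z => ℓ (z - x)) s x ‖y - x‖
  have hgx : g x = 0 := by
    refine le_antisymm (radialSup_le (fun y _ hy => ?_) le_rfl) radialSup_nonneg
    rw [sub_self, norm_zero, norm_le_zero_iff, sub_eq_zero] at hy
    simp [hy]
  have hg_deriv : HasFDerivAt g (0 : E →L[ℝ] ℝ) x := by
    refine .of_isLittleO <| Asymptotics.isLittleO_iff.2 fun c hc => ?_
    obtain ⟨δ, hδ, hδℓ⟩ := Metric.eventually_nhds_iff.1 (eventually_nhdsWithin_iff.1 (hℓ c hc))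
    filter_upwards [ball_mem_nhds x hδ] with y hy
    rw [mem_ball_iff_norm] at hy
    rw [hgx, sub_zero, zero_apply, sub_zero, Real.norm_of_nonneg radialSup_nonneg]
    refine radialSup_le (fun z hz hzy => ?_) (by positivity)
    calc ℓ (z - x) ≤ c * ‖z - x‖ := hδℓ (by rw [dist_eq_norm]; linarith) hz
      _ ≤ c * ‖y - x‖ := by gcongr
  refine ⟨ℓ - g, by simpa only [sub_zero] using ℓ.hasFDerivAt.sub hg_deriv, fun y hy => ?_⟩
  have hℓg : ℓ (y - x) ≤ g y :=
    le_radialSup (fun z => (le_abs_self _).trans (ℓ.le_opNorm (z - x))) hy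
  simp only [Set.mem_ofPred_eq, Pi.sub_apply, hgx, sub_zero]
  linarith [map_sub ℓ y x]

end Construction

section TangentCone

variable {n : ℕ} {A : Set (EuclideanSpace ℝ (Fin n))} {x w : EuclideanSpace ℝ (Fin n)}

theorem upperTangentCone_subset_posTangentConeAt :
    upperTangentCone A x ⊆ posTangentConeAt A x := by
  rintro v ⟨lam, u, hlam, -, huA, hux, hv⟩
  refine mem_tangentConeAt_of_seq atTop (fun k => ⟨(lam k)⁻¹, (inv_pos.2 (hlam k)).le⟩)
    (fun k => u k - x) (by simpa using hux.sub_const x) (.of_forall fun k => by simpa using huA k)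
    hv

theorem exists_mem_upperTangentCone_of_tendsto {y : ℕ → EuclideanSpace ℝ (Fin n)}
    (hyA : ∀ k, y k ∈ A) (hyx : Tendsto y atTop (𝓝 x)) (hne : ∀ k, y k ≠ x) :
    ∃ v ∈ upperTangentCone A x, ∃ ψ : ℕ → ℕ, StrictMono ψ ∧
      Tendsto (fun k => ‖y (ψ k) - x‖⁻¹ • (y (ψ k) - x)) atTop (𝓝 v) := by
  have hsphere : ∀ k, ‖y k - x‖⁻¹ • (y k - x) ∈ sphere (0 : EuclideanSpace ℝ (Fin n)) 1 :=
    fun k => by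
      rw [mem_sphere_zero_iff_norm]
      exact norm_smul_inv_norm (sub_ne_zero.2 (hne k))
  obtain ⟨v, -, ψ, hψ, hv⟩ := (isCompact_sphere _ _).tendsto_subseq hsphere
  have hψ_tendsto := hψ.tendsto_atTop
  refine ⟨v, ⟨fun k => ‖y (ψ k) - x‖, y ∘ ψ, fun k => norm_pos_iff.2 (sub_ne_zero.2 (hne _)),
    ((tendsto_iff_norm_sub_tendsto_zero.1 hyx).comp hψ_tendsto), fun k => hyA _,
    hyx.comp hψ_tendsto, hv⟩, ψ, hψ, hv⟩

theorem eventually_inner_sub_le_of_mem_normalCone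
    (hw : w ∈ normalCone A x) {ε : ℝ} (hε : 0 < ε) :
    ∀ᶠ y in 𝓝[A] x, ⟪w, y - x⟫ ≤ ε * ‖y - x‖ := by
  by_contra h
  rw [not_eventually, frequently_nhdsWithin_iff] at h
  obtain ⟨y, hyx, hy⟩ := exists_seq_forall_of_frequently h
  simp only [not_le] at hy
  have hne : ∀ k, y k ≠ x := fun k hk => by simpa [hk] using (hy k).1
  obtain ⟨v, hv, ψ, -, hψv⟩ := exists_mem_upperTangentCone_of_tendsto (fun k => (hy k).2) hyx hne
  have hεv : ε ≤ ⟪w, v⟫ := by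
    refine ge_of_tendsto (tendsto_const_nhds.inner hψv) (.of_forall fun k => ?_)
    rw [real_inner_smul_right, le_inv_mul_iff₀ (norm_pos_iff.2 (sub_ne_zero.2 (hne _))),
      mul_comm]
    exact (hy (ψ k)).1.le
  linarith [hw v hv]

end TangentCone

theorem gradients_eq_normalCone_general {n : ℕ} (A : Set (EuclideanSpace ℝ (Fin n)))
    (x : EuclideanSpace ℝ (Fin n)) :
    {w : EuclideanSpace ℝ (Fin n) |
        ∃ (f : EuclideanSpace ℝ (Fin n) → ℝ) (Df : EuclideanSpace ℝ (Fin n) →L[ℝ] ℝ),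
          HasFDerivAt f Df x ∧ (∀ y ∈ A, f y ≤ f x) ∧ ∀ v, Df v = ⟪w, v⟫}
      = {w : EuclideanSpace ℝ (Fin n) | ∀ v ∈ upperTangentCone A x, ⟪w, v⟫ ≤ 0} := by
  ext w
  constructor
  · rintro ⟨f, Df, hf, hmax, hDf⟩ v hv
    rw [← hDf]
    exact (isMaxOn_iff.2 hmax).localize.hasFDerivWithinAt_nonpos hf.hasFDerivWithinAt
      (upperTangentCone_subset_posTangentConeAt hv)
  · intro hw
    obtain ⟨f, hf, hmax⟩ := exists_hasFDerivAt_isMaxOn (innerSL ℝ w) fun ε hε =>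
      eventually_inner_sub_le_of_mem_normalCone hw hε
    exact ⟨f, innerSL ℝ w, hf, isMaxOn_iff.1 hmax, fun v => rfl⟩

/-- The gradients of functions differentiable at `x` and maximized over `A` at `x`
form exactly the normal cone of `A` at `x`. -/
theorem gradients_eq_normalCone {n : ℕ} (A : Set (EuclideanSpace ℝ (Fin n)))
    (x : EuclideanSpace ℝ (Fin n)) (hx : x ∈ A) :
    {w : EuclideanSpace ℝ (Fin n) |
        ∃ (f : EuclideanSpace ℝ (Fin n) → ℝ) (Df : EuclideanSpace ℝ (Fin n) →L[ℝ] ℝ),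
          HasFDerivAt f Df x ∧ (∀ y ∈ A, f y ≤ f x) ∧ ∀ v, Df v = ⟪w, v⟫}
      = {w : EuclideanSpace ℝ (Fin n) | ∀ v ∈ upperTangentCone A x, ⟪w, v⟫ ≤ 0} :=
  gradients_eq_normalCone_general A x
end

section
/- (Severi–Guareschi, sequential form) Let A ⊆ ℝᵐ, x̂ ∈ A an accumulation point of A, f : A → ℝᵏ, L : ℝᵐ → ℝᵏ linear. Then f is differentiable at x̂ with differential L if and only if for every v ∈ ℝᵐ with ‖v‖ = 1 and every sequence xₙ ∈ A, xₙ ≠ x̂, with xₙ → x̂ and (xₙ - x̂)/‖xₙ - x̂‖ → v, one has (f(xₙ) - f(x̂))/‖xₙ - x̂‖ → L(v). -/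
open Filter Metric Topology

/-- Severi–Guareschi, sequential form. -/
theorem severi_guareschi_sequential {m k : ℕ}
    (A : Set (EuclideanSpace ℝ (Fin m)))
    (f : EuclideanSpace ℝ (Fin m) → EuclideanSpace ℝ (Fin k))
    (x : EuclideanSpace ℝ (Fin m)) (hxA : x ∈ A) (hacc : AccPt x (Filter.principal A))
    (L : EuclideanSpace ℝ (Fin m) →ₗ[ℝ] EuclideanSpace ℝ (Fin k)) :
    Filter.Tendsto (fun y => ‖y - x‖⁻¹ • (f y - f x - L (y - x)))
        (𝓝[A \ {x}] x) (𝓝 0) ↔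
      ∀ v : EuclideanSpace ℝ (Fin m), ‖v‖ = 1 →
        ∀ u : ℕ → EuclideanSpace ℝ (Fin m),
          (∀ n, u n ∈ A) → (∀ n, u n ≠ x) →
          Filter.Tendsto u Filter.atTop (𝓝 x) →
          Filter.Tendsto (fun n => ‖u n - x‖⁻¹ • (u n - x)) Filter.atTop (𝓝 v) →
          Filter.Tendsto (fun n => ‖u n - x‖⁻¹ • (f (u n) - f x)) Filter.atTop (𝓝 (L v)) := by
  have hLc : Continuous L := L.continuous_of_finiteDimensional
  have key : ∀ y : EuclideanSpace ℝ (Fin m),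
      ‖y - x‖⁻¹ • (f y - f x - L (y - x)) =
        ‖y - x‖⁻¹ • (f y - f x) - L (‖y - x‖⁻¹ • (y - x)) := by
    intro y; rw [map_smul, smul_sub]
  constructor
  · intro h v hv u huA hune hux hdir
    have hmem : ∀ n, u n ∈ A \ {x} := fun n => ⟨huA n, hune n⟩
    have h1 : Tendsto u atTop (𝓝[A \ {x}] x) :=
      tendsto_nhdsWithin_iff.2 ⟨hux, Eventually.of_forall hmem⟩
    have h2 := h.comp h1
    have h3 : Tendsto (fun n => L (‖u n - x‖⁻¹ • (u n - x))) atTop (𝓝 (L v)) :=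
      (hLc.tendsto v).comp hdir
    have h4 := h2.add h3
    rw [zero_add] at h4
    have feq : (fun n => ‖u n - x‖⁻¹ • (f (u n) - f x)) =
        fun n => ((fun y => ‖y - x‖⁻¹ • (f y - f x - L (y - x))) ∘ u) n
          + L (‖u n - x‖⁻¹ • (u n - x)) := by
      funext n; simp only [Function.comp_apply, key]; abel
    rw [feq]; exact h4
  · intro H
    apply tendsto_of_subseq_tendsto
    intro ns hns
    have hmem : ∀ᶠ n in atTop, ns n ∈ A \ {x} :=
      hns (self_mem_nhdsWithin)
    obtain ⟨N, hN⟩ := eventually_atTop.1 hmem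
    set w : ℕ → EuclideanSpace ℝ (Fin m) := fun n => ns (n + N) with hw
    have hwA : ∀ n, w n ∈ A := fun n => (hN _ (Nat.le_add_left N n)).1
    have hwne : ∀ n, w n ≠ x := fun n => (hN _ (Nat.le_add_left N n)).2
    have hwt : Tendsto w atTop (𝓝[A \ {x}] x) :=
      hns.comp (tendsto_add_atTop_nat N)
    have hwx : Tendsto w atTop (𝓝 x) := hwt.mono_right nhdsWithin_le_nhds
    set d : ℕ → EuclideanSpace ℝ (Fin m) := fun n => ‖w n - x‖⁻¹ • (w n - x) with hd
    have hdS : ∀ n, d n ∈ sphere (0 : EuclideanSpace ℝ (Fin m)) 1 := by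
      intro n
      have : w n - x ≠ 0 := sub_ne_zero_of_ne (hwne n)
      simp [hd, norm_smul, norm_inv, inv_mul_cancel₀ (norm_ne_zero_iff.2 this)]
    have hcpt : IsCompact (sphere (0 : EuclideanSpace ℝ (Fin m)) 1) :=
      isCompact_sphere 0 1
    obtain ⟨v, hvS, ψ, hψ, hdψ⟩ := hcpt.tendsto_subseq hdS
    have hv1 : ‖v‖ = 1 := by simpa using hvS
    have hkey := H v hv1 (w ∘ ψ) (fun n => hwA _) (fun n => hwne _)
      (hwx.comp hψ.tendsto_atTop) (hdψ)
    refine ⟨fun n => ψ n + N, ?_⟩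
    have h3 : Tendsto (fun n => L (d (ψ n))) atTop (𝓝 (L v)) :=
      (hLc.tendsto v).comp hdψ
    have h4 := hkey.sub h3
    rw [sub_self] at h4
    have feq : (fun n => ‖ns (ψ n + N) - x‖⁻¹ • (f (ns (ψ n + N)) - f x - L (ns (ψ n + N) - x))) =
        fun n => ‖(w ∘ ψ) n - x‖⁻¹ • (f ((w ∘ ψ) n) - f x) - L (d (ψ n)) := by
      funext n; simp only [Function.comp_apply, hw, hd, key]
    exact feq ▸ h4
end

section
/- (Cyrenian Lemma) Let A ⊆ ℝᵐ, x̂ ∈ A an accumulation point of A, f : A → ℝᵏ, L : ℝᵐ → ℝᵏ linear. Then f is differentiable at x̂ with differential L if and only if for every v ∈ ℝᵐ and all sequences xₙ ∈ A, λₙ > 0 with λₙ → 0, xₙ → x̂, and (xₙ - x̂)/λₙ → v, one has (f(xₙ) - f(x̂))/λₙ → L(v). -/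
open Filter Metric Topology

/-! Necessity is `HasFDerivWithinAt.lim`. For sufficiency, test the difference quotient along an
arbitrary sequence `u n → x` in `A \ {x}` with `λ n = ‖u n - x‖`: the directions
`(u n - x) / λ n` lie on the unit sphere, which is compact, so every subsequence has a further
subsequence along which they converge to some `v`, and along it the hypothesis makes the
remainder quotient tend to `L v - L v = 0`. -/

section

variable {E F : Type*} [NormedAddCommGroup E] [NormedSpace ℝ E] [NormedAddCommGroup F]
  [NormedSpace ℝ F] {f : E → F} {L : E →L[ℝ] F} {s : Set E} {x : E}

theorem hasFDerivWithinAt_iff_tendsto_smul :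
    HasFDerivWithinAt f L s x ↔
      Tendsto (fun y => ‖y - x‖⁻¹ • (f y - f x - L (y - x))) (𝓝[s \ {x}] x) (𝓝 0) := by
  rw [← hasFDerivWithinAt_sdiff_singleton_self, hasFDerivWithinAt_iff_tendsto]
  conv_rhs => rw [tendsto_zero_iff_norm_tendsto_zero]
  simp only [norm_smul, norm_inv, norm_norm]

theorem hasFDerivWithinAt_of_forall_tendsto_smul [ProperSpace E]
    (h : ∀ v (u : ℕ → E) (lam : ℕ → ℝ), (∀ n, u n ∈ s) → (∀ n, 0 < lam n) →
      Tendsto lam atTop (𝓝 0) → Tendsto u atTop (𝓝 x) →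
      Tendsto (fun n => (lam n)⁻¹ • (u n - x)) atTop (𝓝 v) →
      Tendsto (fun n => (lam n)⁻¹ • (f (u n) - f x)) atTop (𝓝 (L v))) :
    HasFDerivWithinAt f L s x := by
  rw [hasFDerivWithinAt_iff_tendsto_smul]
  refine tendsto_of_subseq_tendsto fun ns hns => ?_
  obtain ⟨hns_x, hns_s⟩ := tendsto_nhdsWithin_iff.1 hns
  obtain ⟨N, hN⟩ := eventually_atTop.1 hns_s
  set u : ℕ → E := fun n => ns (n + N)
  set lam : ℕ → ℝ := fun n => ‖u n - x‖
  have hlam : ∀ n, 0 < lam n := fun n => norm_pos_iff.2 (sub_ne_zero.2 (hN _ le_add_self).2)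
  have hux : Tendsto u atTop (𝓝 x) := hns_x.comp (tendsto_add_atTop_nat N)
  have hlam0 : Tendsto lam atTop (𝓝 0) := tendsto_iff_norm_sub_tendsto_zero.1 hux
  have hsphere : ∀ n, (lam n)⁻¹ • (u n - x) ∈ sphere (0 : E) 1 := fun n => by
    simp [lam, norm_smul, (hlam n).ne']
  obtain ⟨v, -, φ, hφ, hv⟩ := (isCompact_sphere (0 : E) 1).tendsto_subseq hsphere
  refine ⟨fun n => φ n + N, ?_⟩
  have hrem := (h v (u ∘ φ) (lam ∘ φ) (fun n => (hN _ le_add_self).1) (fun n => hlam _)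
    (hlam0.comp hφ.tendsto_atTop) (hux.comp hφ.tendsto_atTop) hv).sub
    ((L.continuous.tendsto v).comp hv)
  rw [sub_self] at hrem
  refine hrem.congr fun n => ?_
  simp only [Function.comp_apply, map_smul, ← smul_sub, u, lam]

end

theorem cyrenian_lemma_general {m k : ℕ}
    (A : Set (EuclideanSpace ℝ (Fin m)))
    (f : EuclideanSpace ℝ (Fin m) → EuclideanSpace ℝ (Fin k))
    (x : EuclideanSpace ℝ (Fin m))
    (L : EuclideanSpace ℝ (Fin m) →ₗ[ℝ] EuclideanSpace ℝ (Fin k)) :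
    Filter.Tendsto (fun y => ‖y - x‖⁻¹ • (f y - f x - L (y - x)))
        (𝓝[A \ {x}] x) (𝓝 0) ↔
      ∀ v : EuclideanSpace ℝ (Fin m),
        ∀ (u : ℕ → EuclideanSpace ℝ (Fin m)) (lam : ℕ → ℝ),
          (∀ n, u n ∈ A) → (∀ n, 0 < lam n) →
          Filter.Tendsto lam Filter.atTop (𝓝 0) →
          Filter.Tendsto u Filter.atTop (𝓝 x) →
          Filter.Tendsto (fun n => (lam n)⁻¹ • (u n - x)) Filter.atTop (𝓝 v) →
          Filter.Tendsto (fun n => (lam n)⁻¹ • (f (u n) - f x)) Filter.atTop (𝓝 (L v)) := by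
  have hderiv := hasFDerivWithinAt_iff_tendsto_smul (f := f) (s := A) (x := x)
    (L := LinearMap.toContinuousLinearMap L)
  simp only [LinearMap.coe_toContinuousLinearMap'] at hderiv
  rw [← hderiv]
  refine ⟨fun hf v u lam hu _ _ hux hv => ?_, fun h => hasFDerivWithinAt_of_forall_tendsto_smul h⟩
  simpa using hf.lim (tendsto_sub_nhds_zero_iff.2 hux) (.of_forall fun n => by simpa using hu n) hv

/-- The Cyrenian Lemma. -/
theorem cyrenian_lemma {m k : ℕ}
    (A : Set (EuclideanSpace ℝ (Fin m)))
    (f : EuclideanSpace ℝ (Fin m) → EuclideanSpace ℝ (Fin k))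
    (x : EuclideanSpace ℝ (Fin m)) (hxA : x ∈ A) (hacc : AccPt x (Filter.principal A))
    (L : EuclideanSpace ℝ (Fin m) →ₗ[ℝ] EuclideanSpace ℝ (Fin k)) :
    Filter.Tendsto (fun y => ‖y - x‖⁻¹ • (f y - f x - L (y - x)))
        (𝓝[A \ {x}] x) (𝓝 0) ↔
      ∀ v : EuclideanSpace ℝ (Fin m),
        ∀ (u : ℕ → EuclideanSpace ℝ (Fin m)) (lam : ℕ → ℝ),
          (∀ n, u n ∈ A) → (∀ n, 0 < lam n) →
          Filter.Tendsto lam Filter.atTop (𝓝 0) →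
          Filter.Tendsto u Filter.atTop (𝓝 x) →
          Filter.Tendsto (fun n => (lam n)⁻¹ • (u n - x)) Filter.atTop (𝓝 v) →
          Filter.Tendsto (fun n => (lam n)⁻¹ • (f (u n) - f x)) Filter.atTop (𝓝 (L v)) :=
  cyrenian_lemma_general A f x L
end

section
/- (Severi–Bouligand) Let A ⊆ ℝᵐ, x̂ ∈ A an accumulation point of A, f : A → ℝᵏ continuous at x̂, L : ℝᵐ → ℝᵏ linear. Then f is strictly differentiable at x̂ with strict differential L if and only if the upper paratangent cone of graph(f) at (x̂, f(x̂)) is contained in graph(L). -/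
/-!
If `f` is strictly differentiable, a chord of the graph rescaled by `tₙ → 0` differs from its image
under `id × L` by `o(1)`, so every paratangent vector lies in the graph of `L`. Conversely, if strict
differentiability fails, there are chords `(aₙ, bₙ) → (x̂, x̂)` with
`‖f aₙ - f bₙ - L (aₙ - bₙ)‖ ≥ ε ‖aₙ - bₙ‖`. Their normalisations in `graph f` accumulate, by
compactness of the unit sphere, at a unit paratangent vector `(v, w)` which still satisfies
`‖w - L v‖ ≥ ε ‖v‖`; the cone inclusion `w = L v` then forces `v = 0`, hence `w = 0`, a contradiction.
-/

open Filter Metric Topology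

/-- Upper paratangent cone (sequential description) in a normed space. -/
def upperParatangentCone {E : Type*} [NormedAddCommGroup E] [NormedSpace ℝ E]
    (S : Set E) (p : E) : Set E :=
  {w | ∃ (t : ℕ → ℝ) (u v : ℕ → E),
      (∀ n, 0 < t n) ∧ Filter.Tendsto t Filter.atTop (𝓝 0) ∧
      (∀ n, u n ∈ S) ∧ Filter.Tendsto u Filter.atTop (𝓝 p) ∧
      (∀ n, v n ∈ S) ∧ Filter.Tendsto v Filter.atTop (𝓝 p) ∧
      Filter.Tendsto (fun n => (t n)⁻¹ • (v n - u n)) Filter.atTop (𝓝 w)}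

lemma exists_seq_le_norm_of_not_tendsto_nhdsWithin {X F : Type*} [TopologicalSpace X]
    [FirstCountableTopology X] [NormedAddCommGroup F] {g : X → F} {S : Set X} {p : X}
    (h : ¬Tendsto g (𝓝[S] p) (𝓝 0)) :
    ∃ ε > 0, ∃ q : ℕ → X, (∀ n, q n ∈ S) ∧ Tendsto q atTop (𝓝 p) ∧ ∀ n, ε ≤ ‖g (q n)‖ := by
  rw [Metric.tendsto_nhds] at h
  push Not at h
  obtain ⟨ε, hε, hfreq⟩ := h
  obtain ⟨q, hq, hqS⟩ := exists_seq_forall_of_frequently (frequently_nhdsWithin_iff.1 hfreq)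
  exact ⟨ε, hε, q, fun n => (hqS n).2, hq, fun n => by simpa using (hqS n).1⟩

section

variable {E F : Type*} [NormedAddCommGroup E] [NormedSpace ℝ E]
  [NormedAddCommGroup F] [NormedSpace ℝ F]

lemma exists_norm_eq_one_mem_upperParatangentCone [ProperSpace E] {S K : Set E} {p : E}
    {u v : ℕ → E} (hu : ∀ n, u n ∈ S) (hv : ∀ n, v n ∈ S) (hne : ∀ n, u n ≠ v n)
    (hul : Tendsto u atTop (𝓝 p)) (hvl : Tendsto v atTop (𝓝 p)) (hK : IsClosed K)
    (hchord : ∀ n, ‖v n - u n‖⁻¹ • (v n - u n) ∈ K) :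
    ∃ c ∈ upperParatangentCone S p ∩ K, ‖c‖ = 1 := by
  have hpos : ∀ n, 0 < ‖v n - u n‖ := fun n => norm_pos_iff.2 (sub_ne_zero.2 (hne n).symm)
  have hsphere : ∀ n, ‖v n - u n‖⁻¹ • (v n - u n) ∈ sphere (0 : E) 1 ∩ K := fun n =>
    ⟨by simp [norm_smul, (hpos n).ne'], hchord n⟩
  obtain ⟨c, ⟨hc1, hcK⟩, ψ, hψ, hlim⟩ :=
    ((isCompact_sphere (0 : E) 1).inter_right hK).tendsto_subseq hsphere
  have hdist : Tendsto (fun n => ‖v n - u n‖) atTop (𝓝 0) := by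
    simpa using (hvl.sub hul).norm
  refine ⟨c, ⟨⟨fun n => ‖v (ψ n) - u (ψ n)‖, u ∘ ψ, v ∘ ψ, fun n => hpos (ψ n),
    hdist.comp hψ.tendsto_atTop, fun n => hu (ψ n), hul.comp hψ.tendsto_atTop,
    fun n => hv (ψ n), hvl.comp hψ.tendsto_atTop, hlim⟩, hcK⟩, by simpa using hc1⟩

/-- On the diagonal this is `0` (as `‖0‖⁻¹ = 0`), so coinciding pairs may be fed to its limit. -/
noncomputable def strictSlope (f : E → F) (L : E →L[ℝ] F) (p : E × E) : F :=
  ‖p.1 - p.2‖⁻¹ • (f p.1 - f p.2 - L (p.1 - p.2))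

variable {f : E → F} {L : E →L[ℝ] F} {A : Set E} {x : E}

lemma norm_sub_smul_strictSlope (a b : E) :
    ‖a - b‖ • strictSlope f L (a, b) = f a - f b - L (a - b) := by
  rcases eq_or_ne a b with rfl | hab
  · simp [strictSlope]
  · rw [strictSlope, smul_smul, mul_inv_cancel₀ (norm_ne_zero_iff.2 (sub_ne_zero.2 hab)),
      one_smul]

lemma tendsto_strictSlope_nhdsWithin_prod
    (h : Tendsto (strictSlope f L) (𝓝[(A ×ˢ A) ∩ {p | p.1 ≠ p.2}] (x, x)) (𝓝 0)) :
    Tendsto (strictSlope f L) (𝓝[A ×ˢ A] (x, x)) (𝓝 0) := by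
  have hdiag : Tendsto (strictSlope f L) (𝓝[{p : E × E | p.1 = p.2}] (x, x)) (𝓝 0) :=
    tendsto_const_nhds.congr' <| eventually_nhdsWithin_of_forall fun p (hp : p.1 = p.2) => by
      simp [strictSlope, hp]
  refine (h.sup hdiag).mono_left ?_
  rw [← nhdsWithin_union]
  exact nhdsWithin_mono _ fun p hp => by
    by_cases hp' : p.1 = p.2
    exacts [Or.inr hp', Or.inl ⟨hp, hp'⟩]

theorem upperParatangentCone_graph_subset_of_tendsto_strictSlope
    (h : Tendsto (strictSlope f L) (𝓝[(A ×ˢ A) ∩ {p | p.1 ≠ p.2}] (x, x)) (𝓝 0)) :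
    upperParatangentCone {p : E × F | p.1 ∈ A ∧ p.2 = f p.1} (x, f x) ⊆ {p | p.2 = L p.1} := by
  rintro w ⟨t, u, v, ht0, -, hu, hul, hv, hvl, hw⟩
  set a := fun n => (u n).1
  set b := fun n => (v n).1
  have hslope : Tendsto (fun n => strictSlope f L (b n, a n)) atTop (𝓝 0) :=
    (tendsto_strictSlope_nhdsWithin_prod h).comp <| tendsto_nhdsWithin_iff.2
      ⟨hvl.fst_nhds.prodMk_nhds hul.fst_nhds, Eventually.of_forall fun n => ⟨(hv n).1, (hu n).1⟩⟩
  have hw₁ : Tendsto (fun n => (t n)⁻¹ • (b n - a n)) atTop (𝓝 w.1) := hw.fst_nhds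
  have hw₂ : Tendsto (fun n => (t n)⁻¹ • (f (b n) - f (a n))) atTop (𝓝 w.2) :=
    hw.snd_nhds.congr fun n => by simp [a, b, ← (hu n).2, ← (hv n).2]
  have hzero : Tendsto (fun n => (t n)⁻¹ • (f (b n) - f (a n) - L (b n - a n))) atTop (𝓝 0) := by
    have hprod := hw₁.norm.smul hslope
    rw [smul_zero] at hprod
    refine hprod.congr fun n => ?_
    rw [norm_smul, Real.norm_of_nonneg (inv_pos.2 (ht0 n)).le, mul_smul,
      norm_sub_smul_strictSlope]
  have hlim : Tendsto (fun n => (t n)⁻¹ • (f (b n) - f (a n) - L (b n - a n))) atTop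
      (𝓝 (w.2 - L w.1)) :=
    (hw₂.sub ((L.continuous.tendsto _).comp hw₁)).congr fun n => by
      rw [Function.comp_apply, L.map_smul, ← smul_sub]
  exact sub_eq_zero.1 (tendsto_nhds_unique hlim hzero)

lemma exists_norm_eq_one_mem_upperParatangentCone_graph [ProperSpace E] [ProperSpace F]
    (hcont : ContinuousWithinAt f A x)
    (hnot : ¬Tendsto (strictSlope f L) (𝓝[(A ×ˢ A) ∩ {p | p.1 ≠ p.2}] (x, x)) (𝓝 0)) :
    ∃ ε > 0, ∃ c ∈ upperParatangentCone {p : E × F | p.1 ∈ A ∧ p.2 = f p.1} (x, f x),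
      ‖c‖ = 1 ∧ ε * ‖c.1‖ ≤ ‖c.2 - L c.1‖ := by
  obtain ⟨ε, hε, q, hqS, hq, hεq⟩ := exists_seq_le_norm_of_not_tendsto_nhdsWithin hnot
  set a := fun n => (q n).1
  set b := fun n => (q n).2
  have ha : Tendsto a atTop (𝓝 x) := hq.fst_nhds
  have hb : Tendsto b atTop (𝓝 x) := hq.snd_nhds
  have hfa : Tendsto (f ∘ a) atTop (𝓝 (f x)) := hcont.tendsto.comp <|
    tendsto_nhdsWithin_iff.2 ⟨ha, Eventually.of_forall fun n => (hqS n).1.1⟩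
  have hfb : Tendsto (f ∘ b) atTop (𝓝 (f x)) := hcont.tendsto.comp <|
    tendsto_nhdsWithin_iff.2 ⟨hb, Eventually.of_forall fun n => (hqS n).1.2⟩
  set K : Set (E × F) := {e | ε * ‖e.1‖ ≤ ‖e.2 - L e.1‖}
  have hK : IsClosed K := isClosed_le (by fun_prop) (by fun_prop)
  have hK_smul : ∀ {r : ℝ} {e : E × F}, 0 ≤ r → e ∈ K → r • e ∈ K := fun {r e} hr he => by
    simpa [K, norm_smul, Real.norm_of_nonneg hr, ← smul_sub, mul_left_comm ε] using
      mul_le_mul_of_nonneg_left he hr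
  have hchord : ∀ n, (a n - b n, f (a n) - f (b n)) ∈ K := fun n => by
    have hpos : 0 < ‖a n - b n‖ := norm_pos_iff.2 (sub_ne_zero.2 (hqS n).2)
    change ε * ‖a n - b n‖ ≤ ‖f (a n) - f (b n) - L (a n - b n)‖
    rw [← norm_sub_smul_strictSlope, norm_smul, norm_norm]
    exact (mul_comm ε _).le.trans (mul_le_mul_of_nonneg_left (hεq n) hpos.le)
  obtain ⟨c, ⟨hc, hcK⟩, hc1⟩ := exists_norm_eq_one_mem_upperParatangentCone
    (S := {p : E × F | p.1 ∈ A ∧ p.2 = f p.1})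
    (u := fun n => (b n, f (b n))) (v := fun n => (a n, f (a n)))
    (fun n => ⟨(hqS n).1.2, rfl⟩) (fun n => ⟨(hqS n).1.1, rfl⟩)
    (fun n h => (hqS n).2 (congrArg Prod.fst h).symm) (hb.prodMk_nhds hfb) (ha.prodMk_nhds hfa)
    hK fun n => hK_smul (inv_nonneg.2 (norm_nonneg _)) (hchord n)
  exact ⟨ε, hε, c, hc, hc1, hcK⟩

theorem tendsto_strictSlope_of_upperParatangentCone_graph_subset [ProperSpace E]
    [ProperSpace F] (hcont : ContinuousWithinAt f A x)
    (hcone : upperParatangentCone {p : E × F | p.1 ∈ A ∧ p.2 = f p.1} (x, f x) ⊆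
      {p | p.2 = L p.1}) :
    Tendsto (strictSlope f L) (𝓝[(A ×ˢ A) ∩ {p | p.1 ≠ p.2}] (x, x)) (𝓝 0) := by
  by_contra hnot
  obtain ⟨ε, hε, c, hc, hc1, hcε⟩ :=
    exists_norm_eq_one_mem_upperParatangentCone_graph hcont hnot
  have hc₂ : c.2 = L c.1 := hcone hc
  have hc₁ : c.1 = 0 := by
    rw [hc₂, sub_self, norm_zero] at hcε
    exact norm_le_zero_iff.1 (nonpos_of_mul_nonpos_right hcε hε)
  have hc0 : c = 0 := Prod.ext hc₁ (by simp [hc₂, hc₁])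
  simp [hc0] at hc1

end

theorem severi_bouligand_strict_general {m k : ℕ}
    (A : Set (EuclideanSpace ℝ (Fin m)))
    (f : EuclideanSpace ℝ (Fin m) → EuclideanSpace ℝ (Fin k))
    (x : EuclideanSpace ℝ (Fin m))
    (hcont : ContinuousWithinAt f A x)
    (L : EuclideanSpace ℝ (Fin m) →ₗ[ℝ] EuclideanSpace ℝ (Fin k)) :
    Filter.Tendsto
        (fun p : EuclideanSpace ℝ (Fin m) × EuclideanSpace ℝ (Fin m) =>
          ‖p.1 - p.2‖⁻¹ • (f p.1 - f p.2 - L (p.1 - p.2)))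
        (𝓝[(A ×ˢ A) ∩ {p | p.1 ≠ p.2}] (x, x)) (𝓝 0) ↔
      upperParatangentCone {p : EuclideanSpace ℝ (Fin m) × EuclideanSpace ℝ (Fin k) |
          p.1 ∈ A ∧ p.2 = f p.1} (x, f x)
        ⊆ {p : EuclideanSpace ℝ (Fin m) × EuclideanSpace ℝ (Fin k) | p.2 = L p.1} :=
  ⟨upperParatangentCone_graph_subset_of_tendsto_strictSlope (L := L.toContinuousLinearMap),
    tendsto_strictSlope_of_upperParatangentCone_graph_subset (L := L.toContinuousLinearMap) hcont⟩

/-- Severi–Bouligand: strict differentiability is equivalent to the inclusion of the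
upper paratangent cone of the graph in the graph of `L`. -/
theorem severi_bouligand_strict {m k : ℕ}
    (A : Set (EuclideanSpace ℝ (Fin m)))
    (f : EuclideanSpace ℝ (Fin m) → EuclideanSpace ℝ (Fin k))
    (x : EuclideanSpace ℝ (Fin m)) (hxA : x ∈ A) (hacc : AccPt x (Filter.principal A))
    (hcont : ContinuousWithinAt f A x)
    (L : EuclideanSpace ℝ (Fin m) →ₗ[ℝ] EuclideanSpace ℝ (Fin k)) :
    Filter.Tendsto
        (fun p : EuclideanSpace ℝ (Fin m) × EuclideanSpace ℝ (Fin m) =>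
          ‖p.1 - p.2‖⁻¹ • (f p.1 - f p.2 - L (p.1 - p.2)))
        (𝓝[(A ×ˢ A) ∩ {p | p.1 ≠ p.2}] (x, x)) (𝓝 0) ↔
      upperParatangentCone {p : EuclideanSpace ℝ (Fin m) × EuclideanSpace ℝ (Fin k) |
          p.1 ∈ A ∧ p.2 = f p.1} (x, f x)
        ⊆ {p : EuclideanSpace ℝ (Fin m) × EuclideanSpace ℝ (Fin k) | p.2 = L p.1} :=
  severi_bouligand_strict_general A f x hcont L
end

section
/- (Severi's example) Let A = {(x₁,x₂) ∈ ℝ² : |x₂| ≤ x₁²} and f : A → ℝ the zero function. Then every linear functional L : ℝ² → ℝ with L(e₁) = 0 is a total differential of f at (0,0), but the only total strict differential of f at (0,0) is L = 0. -/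
/-!
Near the origin `A` lies in the cusp `|x₂| ≤ x₁²`, so a functional vanishing on `e₁` is
`O(‖x‖²)` on `A`, hence `o(‖x‖)`. A strict differential, however, sees differences of pairs
of points of `A`: the pairs `(t e₁, 0)` and `((t, t²), (t, -t²))` shrink to the origin while
their differences stay on the rays through `e₁` and `e₂`, and along a ray `L d / ‖d‖` is
constant, so it must vanish on both `e₁` and `e₂`.
-/

open Filter Topology

theorem LinearMap.map_prod_eq {R M : Type*} [Semiring R] [AddCommMonoid M] [Module R M]
    (L : R × R →ₗ[R] M) (p : R × R) : L p = p.1 • L (1, 0) + p.2 • L (0, 1) := by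
  rw [← map_smul, ← map_smul, ← map_add]
  simp

theorem tendsto_inv_norm_sub_mul_of_abs_le_sq {E : Type*} [SeminormedAddCommGroup E]
    {g : E → ℝ} {s : Set E} {x : E} {C : ℝ} (hg : ∀ y ∈ s, |g y| ≤ C * ‖y - x‖ ^ 2) :
    Tendsto (fun y => ‖y - x‖⁻¹ * g y) (𝓝[s] x) (𝓝 0) := by
  refine squeeze_zero_norm' (a := fun y => C * ‖y - x‖) ?_ ?_
  · filter_upwards [self_mem_nhdsWithin] with y hy
    rw [norm_mul, norm_inv, norm_norm, Real.norm_eq_abs]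
    rcases (norm_nonneg (y - x)).eq_or_lt with h | h
    · simp [← h]
    · calc ‖y - x‖⁻¹ * |g y| ≤ ‖y - x‖⁻¹ * (C * ‖y - x‖ ^ 2) := by gcongr; exact hg y hy
        _ = C * ‖y - x‖ := by field_simp
  · simpa using ((tendsto_norm_sub_self x).const_mul C).mono_left nhdsWithin_le_nhds

theorem LinearMap.map_eq_zero_of_tendsto_along_ray {E α : Type*} [NormedAddCommGroup E]
    [NormedSpace ℝ E] (L : E →ₗ[ℝ] ℝ) {l : Filter α} [l.NeBot] {d : α → E}
    (hL : Tendsto (fun a => ‖d a‖⁻¹ * L (d a)) l (𝓝 0)) {v : E} (hv : v ≠ 0) {t : α → ℝ}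
    (hd : ∀ᶠ a in l, 0 < t a ∧ d a = t a • v) : L v = 0 := by
  have homogeneous : ∀ᶠ a in l, ‖v‖⁻¹ * L v = ‖d a‖⁻¹ * L (d a) := by
    filter_upwards [hd] with a ⟨ht, hda⟩
    rw [hda, map_smul, norm_smul, Real.norm_of_nonneg ht.le, smul_eq_mul]
    field_simp
  have := tendsto_nhds_unique (tendsto_const_nhds.congr' homogeneous) hL
  simpa [hv] using this

theorem Continuous.tendsto_nhdsWithin_Ioi {X : Type*} [TopologicalSpace X] {γ : ℝ → X}
    (hγ : Continuous γ) {S : Set X} {x : X} (h0 : γ 0 = x) (hS : ∀ t > 0, γ t ∈ S) :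
    Tendsto γ (𝓝[>] 0) (𝓝[S] x) :=
  h0 ▸ hγ.continuousWithinAt.tendsto_nhdsWithin hS

theorem abs_map_le_of_abs_snd_le_sq (L : ℝ × ℝ →ₗ[ℝ] ℝ) (hL : L (1, 0) = 0) {p : ℝ × ℝ}
    (hp : |p.2| ≤ p.1 ^ 2) : |L p| ≤ |L (0, 1)| * ‖p‖ ^ 2 := by
  rw [L.map_prod_eq, hL, smul_eq_mul, smul_eq_mul, mul_zero, zero_add, abs_mul, mul_comm]
  have hfst : p.1 ^ 2 ≤ ‖p‖ ^ 2 := by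
    rw [← sq_abs]
    exact pow_le_pow_left₀ (abs_nonneg _) (norm_fst_le p) 2
  gcongr
  exact hp.trans hfst

/-- Severi's example: on `A = {(x₁,x₂) : |x₂| ≤ x₁²}` the zero function admits every
linear functional vanishing on `e₁` as a total differential at the origin, but its only
total strict differential at the origin is `0`. -/
theorem severi_example :
    let A : Set (ℝ × ℝ) := {p | |p.2| ≤ p.1 ^ 2}
    let f : ℝ × ℝ → ℝ := fun _ => 0
    (∀ L : (ℝ × ℝ) →ₗ[ℝ] ℝ, L (1, 0) = 0 →
      Filter.Tendsto (fun y : ℝ × ℝ => ‖y - (0, 0)‖⁻¹ * (f y - f (0, 0) - L (y - (0, 0))))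
        (𝓝[A \ {(0, 0)}] (0, 0)) (𝓝 0)) ∧
    (∀ L : (ℝ × ℝ) →ₗ[ℝ] ℝ,
      Filter.Tendsto (fun p : (ℝ × ℝ) × (ℝ × ℝ) =>
          ‖p.1 - p.2‖⁻¹ * (f p.1 - f p.2 - L (p.1 - p.2)))
        (𝓝[(A ×ˢ A) ∩ {p | p.1 ≠ p.2}] ((0, 0), (0, 0))) (𝓝 0) → L = 0) := by
  intro A f
  refine ⟨fun L hL => ?_, fun L hL => ?_⟩
  · refine tendsto_inv_norm_sub_mul_of_abs_le_sq (C := |L (0, 1)|) fun y hy => ?_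
    simpa [f, Prod.mk_zero_zero] using abs_map_le_of_abs_snd_le_sq L hL hy.1
  · replace hL := hL.neg
    simp only [f, sub_self, zero_sub, mul_neg, neg_neg, neg_zero] at hL
    refine LinearMap.prod_ext (LinearMap.ext_ring ?_) (LinearMap.ext_ring ?_)
    · have hpairs : Tendsto (fun t : ℝ => ((t, (0 : ℝ)), ((0 : ℝ), (0 : ℝ)))) (𝓝[>] 0)
          (𝓝[(A ×ˢ A) ∩ {p | p.1 ≠ p.2}] ((0, 0), (0, 0))) :=
        Continuous.tendsto_nhdsWithin_Ioi (by fun_prop) rfl fun t ht => by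
          simp [A, ht.ne', sq_nonneg]
      simpa using L.map_eq_zero_of_tendsto_along_ray (hL.comp hpairs) (v := (1, 0)) (by simp)
        (eventually_nhdsWithin_of_forall fun t (ht : 0 < t) => ⟨ht, by simp⟩)
    · have hpairs : Tendsto (fun t : ℝ => ((t, t ^ 2), (t, -t ^ 2))) (𝓝[>] 0)
          (𝓝[(A ×ˢ A) ∩ {p | p.1 ≠ p.2}] ((0, 0), (0, 0))) :=
        Continuous.tendsto_nhdsWithin_Ioi (by fun_prop) (by simp) fun t (ht : 0 < t) => by
          have : 0 < t ^ 2 := by positivity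
          simp [A, abs_of_pos this]
          linarith
      simpa using L.map_eq_zero_of_tendsto_along_ray (hL.comp hpairs) (v := (0, 1)) (by simp)
        (t := fun t => 2 * t ^ 2) (eventually_nhdsWithin_of_forall fun t (ht : 0 < t) =>
          ⟨by positivity, by ext <;> simp; ring⟩)
end

section
/- (Peano's distance-function theorem) Let F ⊆ ℝⁿ and suppose there exists a continuous function γ : ℝⁿ → F with ‖x - γ(x)‖ = d(x, F) for all x, where d(x,F) = inf_{z∈F}‖x-z‖. Then the function x ↦ d(x,F) is (Fréchet) differentiable at every point x̂ ∉ closure(F), and its gradient at x̂ is (x̂ - γ(x̂))/‖x̂ - γ(x̂)‖. -/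
/-!
For `y` near `x̂`, the nearest points `γ x̂` and `γ y` give `d(y) ≤ ‖y - γ x̂‖` and
`d(x̂) ≤ ‖x̂ - γ y‖`. Together with the Cauchy–Schwarz consequence
`‖a‖ - ‖b‖ ≤ ⟪a / ‖a‖, a - b⟫`, this squeezes `d(y) - d(x̂)` between
`⟪(x̂ - γ y) / ‖x̂ - γ y‖, y - x̂⟫` and `⟪(y - γ x̂) / ‖y - γ x̂‖, y - x̂⟫`. Since `x̂ ∉ closure F`,
both unit vectors tend to `(x̂ - γ x̂) / ‖x̂ - γ x̂‖` as `y → x̂` by continuity of `γ`, which is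
exactly Fréchet differentiability with that gradient.
-/

open Filter Metric Topology RealInnerProductSpace

lemma Asymptotics.IsLittleO.of_le_of_le {α F : Type*} [Norm F] {l : Filter α} {g h k : α → ℝ}
    {m : α → F} (hg : g =o[l] m) (hk : k =o[l] m) (hgh : ∀ᶠ a in l, g a ≤ h a)
    (hhk : ∀ᶠ a in l, h a ≤ k a) : h =o[l] m := by
  refine Asymptotics.IsBigO.trans_isLittleO ?_ (hg.norm_left.add hk.norm_left)
  refine Asymptotics.IsBigO.of_bound 1 ?_
  filter_upwards [hgh, hhk] with a ha hb
  simp only [Real.norm_eq_abs, one_mul]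
  rw [abs_le, abs_of_nonneg (by positivity : 0 ≤ |g a| + |k a|)]
  exact ⟨by linarith [neg_abs_le (g a), abs_nonneg (k a)],
    by linarith [le_abs_self (k a), abs_nonneg (g a)]⟩

section InnerProductSpace

variable {E : Type*} [NormedAddCommGroup E] [InnerProductSpace ℝ E]

lemma norm_sub_norm_le_inner_normalize (a b : E) : ‖a‖ - ‖b‖ ≤ ⟪‖a‖⁻¹ • a, a - b⟫ := by
  rcases eq_or_ne a 0 with rfl | ha
  · simp
  have h_self : ⟪‖a‖⁻¹ • a, a⟫ = ‖a‖ := by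
    rw [real_inner_smul_left, real_inner_self_eq_norm_mul_norm]
    field_simp
  have h_other : ⟪‖a‖⁻¹ • a, b⟫ ≤ ‖b‖ := by
    calc ⟪‖a‖⁻¹ • a, b⟫ ≤ ‖‖a‖⁻¹ • a‖ * ‖b‖ := real_inner_le_norm _ _
      _ = ‖b‖ := by simp [norm_smul, ha]
  rw [inner_sub_right, h_self]
  linarith

lemma isLittleO_inner_sub_of_tendsto {V : E → E} {x u : E} (hV : Tendsto V (𝓝 x) (𝓝 u)) :
    (fun y => ⟪V y - u, y - x⟫) =o[𝓝 x] fun y => y - x := by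
  refine Asymptotics.isLittleO_iff.2 fun ε hε => ?_
  filter_upwards [(tendsto_iff_norm_sub_tendsto_zero.1 hV).eventually_le_const hε] with y hy
  calc ‖⟪V y - u, y - x⟫‖ ≤ ‖V y - u‖ * ‖y - x‖ := by
        simpa using abs_real_inner_le_norm (V y - u) (y - x)
    _ ≤ ε * ‖y - x‖ := by gcongr

theorem hasFDerivAt_of_inner_le_of_le_inner {f : E → ℝ} {V W : E → E} {x u : E}
    (hV : Tendsto V (𝓝 x) (𝓝 u)) (hW : Tendsto W (𝓝 x) (𝓝 u))
    (hlower : ∀ y, ⟪W y, y - x⟫ ≤ f y - f x) (hupper : ∀ y, f y - f x ≤ ⟪V y, y - x⟫) :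
    HasFDerivAt f (innerSL ℝ u) x := by
  rw [hasFDerivAt_iff_isLittleO]
  refine (isLittleO_inner_sub_of_tendsto hW).of_le_of_le (isLittleO_inner_sub_of_tendsto hV)
    (Eventually.of_forall fun y => ?_) (Eventually.of_forall fun y => ?_)
  · simpa [inner_sub_left] using hlower y
  · simpa [inner_sub_left] using hupper y

lemma ContinuousAt.inv_norm_smul {α : Type*} [TopologicalSpace α] {g : α → E} {x : α}
    (hg : ContinuousAt g x) (h0 : g x ≠ 0) : ContinuousAt (fun y => ‖g y‖⁻¹ • g y) x :=
  (hg.norm.inv₀ (norm_ne_zero_iff.2 h0)).smul hg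

lemma infDist_sub_infDist_le_inner {F : Set E} {x p : E} (hp : p ∈ F)
    (hxp : ‖x - p‖ = infDist x F) (y : E) :
    infDist y F - infDist x F ≤ ⟪‖y - p‖⁻¹ • (y - p), y - x⟫ := by
  have hy : infDist y F ≤ ‖y - p‖ := by simpa [dist_eq_norm] using infDist_le_dist_of_mem hp
  have key := norm_sub_norm_le_inner_normalize (y - p) (x - p)
  rw [sub_sub_sub_cancel_right] at key
  linarith

end InnerProductSpace

theorem peano_distance_differentiable_general {n : ℕ}
    (F : Set (EuclideanSpace ℝ (Fin n)))
    (γ : EuclideanSpace ℝ (Fin n) → EuclideanSpace ℝ (Fin n))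
    (hγcont : Continuous γ) (hγmem : ∀ x, γ x ∈ F)
    (hγnear : ∀ x, ‖x - γ x‖ = Metric.infDist x F) :
    ∀ x : EuclideanSpace ℝ (Fin n), x ∉ closure F →
      HasFDerivAt (fun y => Metric.infDist y F)
        (innerSL ℝ (‖x - γ x‖⁻¹ • (x - γ x))) x := by
  intro x hx
  have hxγ : x - γ x ≠ 0 :=
    sub_ne_zero.2 (ne_of_mem_of_not_mem (subset_closure (hγmem x)) hx).symm
  refine hasFDerivAt_of_inner_le_of_le_inner
    (ContinuousAt.inv_norm_smul (g := (· - γ x)) (by fun_prop) hxγ)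
    (ContinuousAt.inv_norm_smul (g := (x - γ ·)) (by fun_prop) hxγ)
    (fun y => ?_) (infDist_sub_infDist_le_inner (hγmem x) (hγnear x))
  have h := infDist_sub_infDist_le_inner (hγmem y) (hγnear y) x
  rw [← neg_sub y x, inner_neg_right] at h
  linarith

/-- Peano's theorem on differentiability of the distance function: if `γ` is a continuous
nearest-point selection onto `F`, then `d(·,F)` is differentiable at every point outside
the closure of `F`, with gradient `(x̂ - γ x̂)/‖x̂ - γ x̂‖`. -/
theorem peano_distance_differentiable {n : ℕ}
    (F : Set (EuclideanSpace ℝ (Fin n))) (hF : F.Nonempty)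
    (γ : EuclideanSpace ℝ (Fin n) → EuclideanSpace ℝ (Fin n))
    (hγcont : Continuous γ) (hγmem : ∀ x, γ x ∈ F)
    (hγnear : ∀ x, ‖x - γ x‖ = Metric.infDist x F) :
    ∀ x : EuclideanSpace ℝ (Fin n), x ∉ closure F →
      HasFDerivAt (fun y => Metric.infDist y F)
        (innerSL ℝ (‖x - γ x‖⁻¹ • (x - γ x))) x :=
  peano_distance_differentiable_general F γ hγcont hγmem hγnear
end
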